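/- For any nonempty string u over Σ and any integers 1 ≤ i < j, the power u^i precedes the power u^j in V-order: u ≺ u² ≺ ⋯ ≺ u^i ≺ ⋯ ≺ u^j. -/

import Mathlib

/-!
Let `g` be the largest letter of `u`. Starring a string whose letters are at most `g` never
deletes a `g` while another letter remains, so after `k` stars the string has
`min (#g) (length - k)` letters `g`. If `u` is a power of `g`, then `u^i` lies on the star path
of `u^j`. Otherwise `u^i` has fewer `g`'s than `u^j`, and the two paths first meet at `g^A`,
`A` the number of `g`'s in `u^i`: one step earlier they are `g^(A+1)` for `u^j` and, for `u^i`,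
a string of length `A + 1` with a single letter below `g`, which is the last position where
they differ.
-/

variable {α : Type*} [LinearOrder α]

/-- The star operation on strings: delete the letter `x_h`, where `h` is the
start of the longest non-decreasing suffix (so `h = 1` iff the whole string is
non-decreasing, and otherwise `x_{h-1} > x_h ≤ x_{h+1} ≤ ⋯ ≤ x_n`). -/
def vstar : List α → List α
  | [] => []
  | a :: t => if List.IsChain (· ≤ ·) (a :: t) then t else a :: vstar t

/-- V-order `≺` between distinct strings `x`, `y`: either `x` lies on the path
`y, y*, y^{2*}, …, ε`, or (if neither lies on the path of the other) taking the
least `s, t` with `x^{(s+1)*} = y^{(t+1)*}` and the greatest position `j` at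
which `s = x^{s*}` and `t = y^{t*}` differ, the letter of `x^{s*}` at `j` is
smaller than that of `y^{t*}`. -/
def VLess (x y : List α) : Prop :=
  (∃ k : ℕ, 0 < k ∧ vstar^[k] y = x) ∨
  ((¬ ∃ k : ℕ, vstar^[k] y = x) ∧ (¬ ∃ k : ℕ, vstar^[k] x = y) ∧
    ∃ s t : ℕ,
      vstar^[s + 1] x = vstar^[t + 1] y ∧
      (∀ s' t' : ℕ, vstar^[s' + 1] x = vstar^[t' + 1] y → s ≤ s' ∧ t ≤ t') ∧
      ∃ j : ℕ, j < (vstar^[s] x).length ∧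
        (∀ j' : ℕ, j < j' → (vstar^[s] x)[j']? = (vstar^[t] y)[j']?) ∧
        ∃ a b : α, (vstar^[s] x)[j]? = some a ∧ (vstar^[t] y)[j]? = some b ∧
          a < b)

theorem vstar_sublist (w : List α) : (vstar w).Sublist w := by
  induction w with
  | nil => simp [vstar]
  | cons a t ih =>
    rw [vstar]
    split
    · exact List.sublist_cons_self a t
    · exact ih.cons_cons a

theorem vstar_iterate_sublist (k : ℕ) (w : List α) : (vstar^[k] w).Sublist w := by
  induction k with
  | zero => rfl
  | succ k ih => rw [Function.iterate_succ_apply']; exact (vstar_sublist _).trans ih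

theorem length_vstar (w : List α) : (vstar w).length = w.length - 1 := by
  induction w with
  | nil => rfl
  | cons a t ih =>
    rw [vstar]
    split
    · simp
    · have ht : 0 < t.length := List.length_pos_iff.mpr (by rintro rfl; simp_all)
      simp only [List.length_cons, ih]
      omega

theorem length_vstar_iterate (k : ℕ) (w : List α) : (vstar^[k] w).length = w.length - k := by
  induction k with
  | zero => rfl
  | succ k ih => rw [Function.iterate_succ_apply', length_vstar, ih]; omega

/-- If `g` bounds the letters of `w`, the star deletes a letter other than `g` as long as
there is one. -/
theorem count_vstar {w : List α} {g : α} (hw : ∀ a ∈ w, a ≤ g) :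
    (vstar w).count g = min (w.count g) (w.length - 1) := by
  induction w with
  | nil => rfl
  | cons a t ih =>
    have ht : ∀ b ∈ t, b ≤ g := fun b hb => hw b (List.mem_cons_of_mem a hb)
    have hcount : t.count g ≤ t.length := List.count_le_length
    rw [vstar]
    split
    case isTrue hchain =>
      have hsorted := (List.pairwise_cons.mp (List.isChain_iff_pairwise.mp hchain)).1
      by_cases hag : a = g
      · subst hag
        have : t.count a = t.length :=
          List.count_eq_length.mpr fun b hb => le_antisymm (hsorted b hb) (ht b hb)
        simp [this]
      · simp [hag, hcount]
    case isFalse hchain =>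
      have hlt : t.count g < t.length := by
        refine lt_of_le_of_ne hcount fun hall => hchain ?_
        have hall := List.count_eq_length.mp hall
        refine List.isChain_iff_pairwise.mpr (List.pairwise_cons.mpr ⟨?_, ?_⟩)
        · intro c hc
          rw [← hall c hc]
          exact hw a List.mem_cons_self
        · refine List.pairwise_of_forall_mem_list fun b hb c hc => ?_
          rw [← hall b hb, ← hall c hc]
      simp only [List.count_cons, ih ht, List.length_cons]
      split <;> omega

theorem count_vstar_iterate {w : List α} {g : α} (hw : ∀ a ∈ w, a ≤ g) (k : ℕ) :
    (vstar^[k] w).count g = min (w.count g) (w.length - k) := by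
  induction k with
  | zero => simp [List.count_le_length]
  | succ k ih =>
    rw [Function.iterate_succ_apply',
      count_vstar fun a ha => hw a ((vstar_iterate_sublist k w).subset ha), ih,
      length_vstar_iterate]
    omega

theorem vstar_iterate_eq_replicate {w : List α} {g : α} (hw : ∀ a ∈ w, a ≤ g) {k : ℕ}
    (hk : w.length - w.count g ≤ k) : vstar^[k] w = List.replicate (w.length - k) g := by
  have hcount := count_vstar_iterate hw k
  rw [List.eq_replicate_iff, length_vstar_iterate]
  refine ⟨rfl, fun b hb => (List.count_eq_length.mp ?_ b hb).symm⟩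
  rw [hcount, length_vstar_iterate]
  omega

theorem vstar_iterate_replicate (k n : ℕ) (a : α) :
    vstar^[k] (List.replicate n a) = List.replicate (n - k) a := by
  have h := vstar_iterate_eq_replicate (k := k) (w := List.replicate n a) (g := a)
    (by simp) (by simp)
  simpa using h

theorem vless_replicate_of_lt {m n : ℕ} (a : α) (h : m < n) :
    VLess (List.replicate m a) (List.replicate n a) :=
  Or.inl ⟨n - m, by omega, by rw [vstar_iterate_replicate]; congr 1; omega⟩

theorem exists_eq_append_cons_replicate {β : Type*} {w : List β} {g : β} (h : ∃ b ∈ w, b ≠ g) :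
    ∃ w₁ b m, b ≠ g ∧ w = w₁ ++ b :: List.replicate m g := by
  induction w using List.reverseRecOn with
  | nil => simp at h
  | append_singleton w a ih =>
    by_cases hag : a = g
    · subst hag
      obtain ⟨w₁, b, m, hbg, rfl⟩ := ih (by simpa using h)
      exact ⟨w₁, b, m + 1, hbg, by simp [List.replicate_succ']⟩
    · exact ⟨w, a, 0, hag, by simp⟩

/-- The last clause of `VLess`, comparing the strings at their last differing position. -/
def LastDiffLt (x y : List α) : Prop :=
  ∃ j < x.length, (∀ j', j < j' → x[j']? = y[j']?) ∧
    ∃ a b, x[j]? = some a ∧ y[j]? = some b ∧ a < b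

theorem lastDiffLt_replicate {w : List α} {g : α} (hw : ∀ a ∈ w, a ≤ g)
    (hcount : w.count g < w.length) : LastDiffLt w (List.replicate w.length g) := by
  have hne : ∃ b ∈ w, b ≠ g := by
    by_contra! hall
    exact hcount.ne (List.count_eq_length.mpr fun b hb => (hall b hb).symm)
  obtain ⟨w₁, b, m, hbg, rfl⟩ := exists_eq_append_cons_replicate hne
  have hb : b < g := lt_of_le_of_ne (hw b (by simp)) hbg
  refine ⟨w₁.length, by simp, fun j hj => ?_, b, g, by simp, by simp, hb⟩
  simp only [List.getElem?_append_right hj.le, List.getElem?_cons, List.getElem?_replicate,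
    List.length_append, List.length_cons, List.length_replicate]
  split_ifs <;> first | rfl | omega

theorem vless_of_count_lt {x y : List α} {g : α} (hx : ∀ a ∈ x, a ≤ g) (hy : ∀ a ∈ y, a ≤ g)
    (hxg : x.count g < x.length) (hxy : x.count g < y.count g) : VLess x y := by
  have hyg : y.count g ≤ y.length := List.count_le_length
  have hcx := count_vstar_iterate hx
  have hcy := count_vstar_iterate hy
  right
  refine ⟨?_, ?_, x.length - x.count g - 1, y.length - x.count g - 1, ?_, ?_, ?_⟩
  · rintro ⟨k, hk⟩
    have hlen := congrArg List.length hk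
    have hcount := congrArg (List.count g) hk
    rw [length_vstar_iterate] at hlen
    rw [hcy] at hcount
    omega
  · rintro ⟨k, hk⟩
    have hcount := congrArg (List.count g) hk
    rw [hcx] at hcount
    omega
  · rw [vstar_iterate_eq_replicate hx (by omega), vstar_iterate_eq_replicate hy (by omega)]
    congr 1
    omega
  · intro s t hst
    have hlen := congrArg List.length hst
    have hcount := congrArg (List.count g) hst
    rw [length_vstar_iterate, length_vstar_iterate] at hlen
    rw [hcx, hcy] at hcount
    omega
  · have hlen : y.length - (y.length - x.count g - 1) =
        (vstar^[x.length - x.count g - 1] x).length := by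
      rw [length_vstar_iterate]; omega
    rw [vstar_iterate_eq_replicate hy (by omega), hlen]
    refine lastDiffLt_replicate (fun a ha => hx a ((vstar_iterate_sublist _ x).subset ha)) ?_
    rw [hcx, length_vstar_iterate]
    omega

/-- Powers of a nonempty string are V-ordered by exponent: for `1 ≤ i < j`,
`u^i ≺ u^j`, so `u ≺ u² ≺ ⋯ ≺ u^i ≺ ⋯ ≺ u^j`. -/
theorem vless_pow_lt_pow {α : Type*} [LinearOrder α]
    (u : List α) (hu : u ≠ []) (i j : ℕ) (hi : 1 ≤ i) (hij : i < j) :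
    VLess (List.replicate i u).flatten (List.replicate j u).flatten := by
  obtain ⟨g, hgu, hmax⟩ := u.toFinset.exists_max_image id (by simpa using hu)
  simp only [List.mem_toFinset, id] at hgu hmax
  have hle : ∀ n, ∀ a ∈ (List.replicate n u).flatten, a ≤ g := fun n a ha => by
    simp only [List.mem_flatten, List.mem_replicate] at ha
    obtain ⟨_, ⟨_, rfl⟩, ha⟩ := ha
    exact hmax a ha
  have hlen : 0 < u.length := List.length_pos_iff.mpr hu
  have hcount : 0 < u.count g := List.count_pos_iff.mpr hgu
  by_cases hconst : u.count g = u.length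
  · have hrep : u = List.replicate u.length g :=
      List.eq_replicate_iff.mpr ⟨rfl, fun b hb => (List.count_eq_length.mp hconst b hb).symm⟩
    rw [hrep, List.flatten_replicate_replicate, List.flatten_replicate_replicate]
    exact vless_replicate_of_lt g (Nat.mul_lt_mul_of_pos_right hij hlen)
  · have hlt : u.count g < u.length := lt_of_le_of_ne List.count_le_length hconst
    refine vless_of_count_lt (hle i) (hle j) ?_ ?_ <;>
      simp only [List.count_flatten, List.length_flatten, List.map_replicate, List.sum_replicate,
        smul_eq_mul]
    · exact Nat.mul_lt_mul_of_pos_left hlt hi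
    · exact Nat.mul_lt_mul_of_pos_right hij hcount
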